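/- arXiv:1903.05873 — 5 statements merged into one kernel-verified Lean document; each statement's English description precedes it below -/
import Mathlib

section
/- Let p, q, r : Ω → [1,∞] be measurable with 1/q(x) = 1/p(x) + 1/r(x) for all x ∈ Ω. If u ∈ L^{p(x)}(Ω : X) and v ∈ L^{r(x)}(Ω : ℝ), then uv ∈ L^{q(x)}(Ω : X) and ‖uv‖_{q(x)} ≤ 2 ‖u‖_{p(x)} ‖v‖_{r(x)}. -/
open MeasureTheory Set ENNReal Real
noncomputable section

/-- The Young-type function `φ_{p}(t)`: `t^p` for `p < ∞`, and `0` for `t ≤ 1`, `∞` for `t > 1`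
when `p = ∞`. -/
def phiVar (p : ℝ≥0∞) (t : ℝ) : ℝ≥0∞ :=
  if p = ⊤ then (if t ≤ 1 then 0 else ⊤) else ENNReal.ofReal (t ^ p.toReal)

/-- The modular `ρ(g) = ∫_Ω φ_{p(x)}(g(x)) dx` of a nonnegative function `g`. -/
def rhoVar (p : ℝ → ℝ≥0∞) (Ω : Set ℝ) (g : ℝ → ℝ) : ℝ≥0∞ :=
  ∫⁻ x in Ω, phiVar (p x) (g x)

/-- The Luxemburg norm of `f` on `Ω` with variable exponent `p`. -/
def luxNorm {X : Type*} [NormedAddCommGroup X] (p : ℝ → ℝ≥0∞) (Ω : Set ℝ) (f : ℝ → X) : ℝ :=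
  sInf {lam : ℝ | 0 < lam ∧ rhoVar p Ω (fun x => ‖f x‖ / lam) ≤ 1}

/-- Membership in the variable-exponent Lebesgue space `L^{p(x)}(Ω : X)`. -/
def MemLvar {X : Type*} [NormedAddCommGroup X] (p : ℝ → ℝ≥0∞) (Ω : Set ℝ) (f : ℝ → X) : Prop :=
  AEStronglyMeasurable f (volume.restrict Ω) ∧
    ∃ lam > 0, rhoVar p Ω (fun x => lam * ‖f x‖) < ⊤

/-- Stepanov `p(x)`-boundedness: all translates lie in `L^{p(x)}([0,1]:X)` with uniformly
bounded Luxemburg norms. -/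
def StepanovBounded {X : Type*} [NormedAddCommGroup X] (p : ℝ → ℝ≥0∞) (I : Set ℝ)
    (f : ℝ → X) : Prop :=
  (∀ t ∈ I, MemLvar p (Icc 0 1) (fun s => f (t + s))) ∧
    ∃ C : ℝ, ∀ t ∈ I, luxNorm p (Icc 0 1) (fun s => f (t + s)) ≤ C

/-- The Stepanov `p(x)`-norm `sup_{t ∈ I} ‖f(t+·)‖_{L^{p(x)}[0,1]}`. -/
def stepNorm {X : Type*} [NormedAddCommGroup X] (p : ℝ → ℝ≥0∞) (I : Set ℝ) (f : ℝ → X) : ℝ :=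
  sSup ((fun t => luxNorm p (Icc 0 1) (fun s => f (t + s))) '' I)

/-- `S` is relatively dense in `I`: there is `l > 0` such that every subinterval of `I` of
length `l` meets `S`. -/
def RelDenseIn (I S : Set ℝ) : Prop :=
  ∃ l > 0, ∀ a : ℝ, Icc a (a + l) ⊆ I → (S ∩ Icc a (a + l)).Nonempty

/-- Bohr almost periodicity of `f : I → X`. -/
def AlmostPeriodicOn {X : Type*} [NormedAddCommGroup X] (I : Set ℝ) (f : ℝ → X) : Prop :=
  ContinuousOn f I ∧
    ∀ ε > 0, RelDenseIn I {τ | 0 < τ ∧ ∀ t ∈ I, ‖f (t + τ) - f t‖ ≤ ε}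

/-- Stepanov `p(x)`-almost periodicity: the map `t ↦ f(t+·)` into `L^{p(x)}([0,1]:X)` is
well defined, continuous and almost periodic. -/
def StepanovAP {X : Type*} [NormedAddCommGroup X] (p : ℝ → ℝ≥0∞) (I : Set ℝ) (f : ℝ → X) : Prop :=
  (∀ t ∈ I, MemLvar p (Icc 0 1) (fun s => f (t + s))) ∧
  (∀ t ∈ I, ∀ ε > 0, ∃ δ > 0, ∀ t' ∈ I, |t' - t| < δ →
      luxNorm p (Icc 0 1) (fun s => f (t' + s) - f (t + s)) ≤ ε) ∧
  (∀ ε > 0, RelDenseIn I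
      {τ | 0 < τ ∧ ∀ t ∈ I, luxNorm p (Icc 0 1) (fun s => f (t + τ + s) - f (t + s)) ≤ ε})

/-!
Pointwise, Young's inequality for the conjugate exponents `p/q` and `r/q` gives
`φ_q(st/2) ≤ (φ_p(s) + φ_r(t))/2` (for an infinite exponent this degenerates into a bound by a
single term). Integrating it with `s = ‖u‖/a`, `t = |v|/b` for admissible `a`, `b` in the
Luxemburg infima shows that `2ab` is admissible for `uv`; taking the infimum over `a`, then
over `b`, gives the bound.
-/

lemma phiVar_top_of_le {t : ℝ} (ht : t ≤ 1) : phiVar ⊤ t = 0 := by simp [phiVar, ht]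

lemma phiVar_top_of_one_lt {t : ℝ} (ht : 1 < t) : phiVar ⊤ t = ⊤ := by
  simp [phiVar, ht.not_ge]

lemma phiVar_of_ne_top {p : ℝ≥0∞} (hp : p ≠ ⊤) (t : ℝ) :
    phiVar p t = ENNReal.ofReal (t ^ p.toReal) := by simp [phiVar, hp]

lemma one_le_toReal_of_one_le {p : ℝ≥0∞} (hp : 1 ≤ p) (hp_top : p ≠ ⊤) : 1 ≤ p.toReal := by
  simpa using ENNReal.toReal_mono hp_top hp

lemma phiVar_mul_le {p : ℝ≥0∞} (hp : 1 ≤ p) {ε t : ℝ} (hε0 : 0 < ε) (hε1 : ε ≤ 1) (ht : 0 ≤ t) :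
    phiVar p (ε * t) ≤ ENNReal.ofReal ε * phiVar p t := by
  rcases eq_or_ne p ⊤ with rfl | hp_top
  · rcases le_or_gt t 1 with ht1 | ht1
    · simp [phiVar_top_of_le (mul_le_one₀ hε1 ht ht1)]
    · simp [phiVar_top_of_one_lt ht1, ENNReal.mul_top, hε0]
  · have hP : 1 ≤ p.toReal := one_le_toReal_of_one_le hp hp_top
    have hεP : ε ^ p.toReal ≤ ε := Real.rpow_le_self_of_le_one hε0.le hε1 hP
    rw [phiVar_of_ne_top hp_top, phiVar_of_ne_top hp_top, ← ENNReal.ofReal_mul hε0.le,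
      Real.mul_rpow hε0.le ht]
    gcongr

lemma measurable_phiVar : Measurable (fun x : ℝ≥0∞ × ℝ => phiVar x.1 x.2) := by
  unfold phiVar
  refine Measurable.ite (measurable_fst (measurableSet_singleton ⊤)) ?_ ?_
  · exact Measurable.ite (measurable_snd measurableSet_Iic) measurable_const measurable_const
  · exact ENNReal.measurable_ofReal.comp
      (measurable_snd.pow (ENNReal.measurable_toReal.comp measurable_fst))

lemma AEMeasurable.phiVar {α : Type*} [MeasurableSpace α] {μ : Measure α} {p : α → ℝ≥0∞}
    {g : α → ℝ} (hp : AEMeasurable p μ) (hg : AEMeasurable g μ) :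
    AEMeasurable (fun x => _root_.phiVar (p x) (g x)) μ :=
  measurable_phiVar.comp_aemeasurable (hp.prodMk hg)

lemma rpow_div_two_le {Q t : ℝ} (hQ : 1 ≤ Q) (ht : 0 ≤ t) : (t / 2) ^ Q ≤ t ^ Q / 2 := by
  rw [Real.div_rpow ht zero_le_two]
  exact div_le_div_of_nonneg_left (by positivity) two_pos
    (Real.self_le_rpow_of_one_le one_le_two hQ)

lemma mul_div_two_rpow_le {P Q R c d : ℝ} (hQ : 1 ≤ Q) (hP : 0 < P) (hR : 0 < R)
    (h : Q⁻¹ = P⁻¹ + R⁻¹) (hc : 0 ≤ c) (hd : 0 ≤ d) :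
    (c * d / 2) ^ Q ≤ (c ^ P + d ^ R) / 2 := by
  have hQ0 : 0 < Q := one_pos.trans_le hQ
  -- Young's inequality for the conjugate exponents `P / Q` and `R / Q`, applied to `c^Q, d^Q`
  have hPR : (P / Q).HolderConjugate (R / Q) := by
    refine ⟨?_, div_pos hP hQ0, div_pos hR hQ0⟩
    rw [inv_div, inv_div, div_eq_mul_inv, div_eq_mul_inv, ← mul_add, ← h,
      mul_inv_cancel₀ hQ0.ne', inv_one]
  have young : c ^ Q * d ^ Q ≤ c ^ P + d ^ R := by
    have hy := Real.young_inequality_of_nonneg (Real.rpow_nonneg hc Q) (Real.rpow_nonneg hd Q) hPR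
    rw [← Real.rpow_mul hc, mul_div_cancel₀ P hQ0.ne', ← Real.rpow_mul hd,
      mul_div_cancel₀ R hQ0.ne'] at hy
    refine hy.trans (add_le_add ?_ ?_)
    · exact div_le_self (Real.rpow_nonneg hc P) hPR.lt.le
    · exact div_le_self (Real.rpow_nonneg hd R) hPR.symm.lt.le
  calc (c * d / 2) ^ Q ≤ (c * d) ^ Q / 2 := rpow_div_two_le hQ (mul_nonneg hc hd)
    _ = c ^ Q * d ^ Q / 2 := by rw [Real.mul_rpow hc hd]
    _ ≤ (c ^ P + d ^ R) / 2 := by gcongr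

lemma phiVar_mul_div_two_le {s : ℝ≥0∞} (hs : 1 ≤ s) {c d : ℝ} (hc0 : 0 ≤ c) (hc1 : c ≤ 1)
    (hd : 0 ≤ d) : phiVar s (c * d / 2) ≤ phiVar s d / 2 := by
  rcases eq_or_ne s ⊤ with rfl | hs_top
  · rcases le_or_gt d 1 with hd1 | hd1
    · rw [phiVar_top_of_le (by nlinarith)]
      exact zero_le
    · simp [phiVar_top_of_one_lt hd1, ENNReal.top_div]
  · have hS : 1 ≤ s.toReal := one_le_toReal_of_one_le hs hs_top
    rw [phiVar_of_ne_top hs_top, phiVar_of_ne_top hs_top, ← ENNReal.ofReal_ofNat 2,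
      ← ENNReal.ofReal_div_of_pos two_pos]
    refine ENNReal.ofReal_le_ofReal (le_trans ?_ (rpow_div_two_le hS hd))
    gcongr
    exact mul_le_of_le_one_left hd hc1

lemma phiVar_top_young {s : ℝ≥0∞} (hs : 1 ≤ s) {c d : ℝ} (hc : 0 ≤ c) (hd : 0 ≤ d) :
    phiVar s (c * d / 2) ≤ (phiVar ⊤ c + phiVar s d) / 2 := by
  rcases le_or_gt c 1 with hc1 | hc1
  · rw [phiVar_top_of_le hc1, zero_add]
    exact phiVar_mul_div_two_le hs hc hc1 hd
  · simp [phiVar_top_of_one_lt hc1, ENNReal.top_div]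

lemma phiVar_young {p q r : ℝ≥0∞} (hp : 1 ≤ p) (hq : 1 ≤ q) (hr : 1 ≤ r)
    (h : q⁻¹ = p⁻¹ + r⁻¹) {c d : ℝ} (hc : 0 ≤ c) (hd : 0 ≤ d) :
    phiVar q (c * d / 2) ≤ (phiVar p c + phiVar r d) / 2 := by
  rcases eq_or_ne p ⊤ with rfl | hp_top
  · rw [ENNReal.inv_top, zero_add, inv_inj] at h
    exact h ▸ phiVar_top_young hr hc hd
  rcases eq_or_ne r ⊤ with rfl | hr_top
  · rw [ENNReal.inv_top, add_zero, inv_inj] at h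
    rw [mul_comm, add_comm]
    exact h ▸ phiVar_top_young hp hd hc
  have hq_top : q ≠ ⊤ := by
    rw [← ENNReal.inv_ne_zero, h]
    simp [hp_top]
  have hp0 : p ≠ 0 := (one_pos.trans_le hp).ne'
  have hr0 : r ≠ 0 := (one_pos.trans_le hr).ne'
  have hreal : q.toReal⁻¹ = p.toReal⁻¹ + r.toReal⁻¹ := by
    rw [← ENNReal.toReal_inv, h, ENNReal.toReal_add (by simpa using hp0) (by simpa using hr0),
      ENNReal.toReal_inv, ENNReal.toReal_inv]
  rw [phiVar_of_ne_top hq_top, phiVar_of_ne_top hp_top, phiVar_of_ne_top hr_top,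
    ← ENNReal.ofReal_add (by positivity) (by positivity), ← ENNReal.ofReal_ofNat 2,
    ← ENNReal.ofReal_div_of_pos two_pos]
  exact ENNReal.ofReal_le_ofReal <| mul_div_two_rpow_le (one_le_toReal_of_one_le hq hq_top)
    (ENNReal.toReal_pos hp0 hp_top) (ENNReal.toReal_pos hr0 hr_top) hreal hc hd

lemma rhoVar_const_mul_le {p : ℝ → ℝ≥0∞} (hp : ∀ x, 1 ≤ p x) (Ω : Set ℝ) {g : ℝ → ℝ}
    (hg : ∀ x, 0 ≤ g x) {ε : ℝ} (hε0 : 0 < ε) (hε1 : ε ≤ 1) :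
    rhoVar p Ω (fun x => ε * g x) ≤ ENNReal.ofReal ε * rhoVar p Ω g :=
  (lintegral_mono fun x => phiVar_mul_le (hp x) hε0 hε1 (hg x)).trans_eq
    (lintegral_const_mul' _ _ ENNReal.ofReal_ne_top)

lemma MemLvar.exists_rhoVar_div_le_one {X : Type*} [NormedAddCommGroup X] {p : ℝ → ℝ≥0∞}
    {Ω : Set ℝ} {f : ℝ → X} (hf : MemLvar p Ω f) (hp : ∀ x, 1 ≤ p x) :
    ∃ lam > 0, rhoVar p Ω (fun x => ‖f x‖ / lam) ≤ 1 := by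
  obtain ⟨-, μ, hμ, hM⟩ := hf
  set M := rhoVar p Ω (fun x => μ * ‖f x‖)
  set ε : ℝ := (M.toReal + 1)⁻¹
  have hε0 : 0 < ε := by positivity
  have hε1 : ε ≤ 1 := inv_le_one_of_one_le₀ (by linarith [M.toReal_nonneg])
  refine ⟨(ε * μ)⁻¹, by positivity, ?_⟩
  calc rhoVar p Ω (fun x => ‖f x‖ / (ε * μ)⁻¹)
      = rhoVar p Ω (fun x => ε * (μ * ‖f x‖)) := by
        congr 1
        funext x
        rw [div_inv_eq_mul]
        ring
    _ ≤ ENNReal.ofReal ε * M := rhoVar_const_mul_le hp Ω (fun x => by positivity) hε0 hε1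
    _ = ENNReal.ofReal (ε * M.toReal) := by
        rw [ENNReal.ofReal_mul hε0.le, ENNReal.ofReal_toReal hM.ne]
    _ ≤ 1 := ENNReal.ofReal_le_one.2 ((inv_mul_le_one₀ (by positivity)).2 (by linarith))

lemma luxNorm_nonneg {X : Type*} [NormedAddCommGroup X] (p : ℝ → ℝ≥0∞) (Ω : Set ℝ)
    (f : ℝ → X) : 0 ≤ luxNorm p Ω f :=
  Real.sInf_nonneg fun _ h => h.1.le

lemma luxNorm_le {X : Type*} [NormedAddCommGroup X] {p : ℝ → ℝ≥0∞} {Ω : Set ℝ} {f : ℝ → X}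
    {lam : ℝ} (hlam : 0 < lam) (h : rhoVar p Ω (fun x => ‖f x‖ / lam) ≤ 1) :
    luxNorm p Ω f ≤ lam :=
  csInf_le ⟨0, fun _ h => h.1.le⟩ ⟨hlam, h⟩

lemma le_mul_luxNorm {X : Type*} [NormedAddCommGroup X] {p : ℝ → ℝ≥0∞} {Ω : Set ℝ}
    {f : ℝ → X} (hf : MemLvar p Ω f) (hp : ∀ x, 1 ≤ p x) {c y : ℝ} (hc : 0 ≤ c)
    (h : ∀ lam > 0, rhoVar p Ω (fun x => ‖f x‖ / lam) ≤ 1 → y ≤ c * lam) :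
    y ≤ c * luxNorm p Ω f := by
  obtain ⟨lam₀, hlam₀, hρ₀⟩ := hf.exists_rhoVar_div_le_one hp
  rcases hc.eq_or_lt with rfl | hc
  · simpa using h lam₀ hlam₀ hρ₀
  · rw [← div_le_iff₀' hc]
    exact le_csInf ⟨lam₀, hlam₀, hρ₀⟩ fun lam hlam => (div_le_iff₀' hc).2 (h lam hlam.1 hlam.2)

lemma rhoVar_smul_div_le {X : Type*} [NormedAddCommGroup X] [NormedSpace ℝ X] {Ω : Set ℝ}
    (hΩ : MeasurableSet Ω) {p q r : ℝ → ℝ≥0∞} (hpm : Measurable p)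
    (hp : ∀ x ∈ Ω, 1 ≤ p x) (hq : ∀ x ∈ Ω, 1 ≤ q x) (hr : ∀ x ∈ Ω, 1 ≤ r x)
    (hpqr : ∀ x ∈ Ω, (q x)⁻¹ = (p x)⁻¹ + (r x)⁻¹) {u : ℝ → X} (v : ℝ → ℝ)
    (hu : AEStronglyMeasurable u (volume.restrict Ω)) {a b : ℝ} (ha : 0 ≤ a) (hb : 0 ≤ b) :
    rhoVar q Ω (fun x => ‖v x • u x‖ / (2 * a * b)) ≤
      (rhoVar p Ω (fun x => ‖u x‖ / a) + rhoVar r Ω (fun x => ‖v x‖ / b)) / 2 := by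
  have hpt : ∀ x ∈ Ω, phiVar (q x) (‖v x • u x‖ / (2 * a * b)) ≤
      (phiVar (p x) (‖u x‖ / a) + phiVar (r x) (‖v x‖ / b)) / 2 := by
    intro x hx
    have harg : ‖v x • u x‖ / (2 * a * b) = ‖u x‖ / a * (‖v x‖ / b) / 2 := by
      rw [norm_smul]
      ring
    rw [harg]
    exact phiVar_young (hp x hx) (hq x hx) (hr x hx) (hpqr x hx) (by positivity) (by positivity)
  have hmeas : AEMeasurable (fun x => phiVar (p x) (‖u x‖ / a)) (volume.restrict Ω) :=
    hpm.aemeasurable.phiVar (hu.norm.aemeasurable.div_const a)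
  calc rhoVar q Ω (fun x => ‖v x • u x‖ / (2 * a * b))
      ≤ ∫⁻ x in Ω, (phiVar (p x) (‖u x‖ / a) + phiVar (r x) (‖v x‖ / b)) / 2 :=
        setLIntegral_mono' hΩ hpt
    _ = _ := by
        simp_rw [ENNReal.div_eq_inv_mul]
        rw [lintegral_const_mul' _ _ (by norm_num), lintegral_add_left' hmeas]
        rfl

theorem stmt1_general {X : Type*} [NormedAddCommGroup X] [NormedSpace ℝ X] (Ω : Set ℝ) (hΩ : MeasurableSet Ω)
    (p q r : ℝ → ℝ≥0∞) (hpm : Measurable p)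
    (hp1 : ∀ x, 1 ≤ p x) (hq1 : ∀ x, 1 ≤ q x) (hr1 : ∀ x, 1 ≤ r x)
    (hpqr : ∀ x ∈ Ω, (q x)⁻¹ = (p x)⁻¹ + (r x)⁻¹)
    (u : ℝ → X) (v : ℝ → ℝ) (hu : MemLvar p Ω u) (hv : MemLvar r Ω v) :
    MemLvar q Ω (fun x => v x • u x) ∧
      luxNorm q Ω (fun x => v x • u x) ≤ 2 * luxNorm p Ω u * luxNorm r Ω v := by
  have key : ∀ a > 0, ∀ b > 0, rhoVar p Ω (fun x => ‖u x‖ / a) ≤ 1 →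
      rhoVar r Ω (fun x => ‖v x‖ / b) ≤ 1 →
      rhoVar q Ω (fun x => ‖v x • u x‖ / (2 * a * b)) ≤ 1 := by
    intro a ha b hb hua hvb
    refine (rhoVar_smul_div_le hΩ hpm (fun x _ => hp1 x) (fun x _ => hq1 x) (fun x _ => hr1 x)
      hpqr v hu.1 ha.le hb.le).trans ?_
    calc _ ≤ ((1 : ℝ≥0∞) + 1) / 2 := by gcongr
      _ = 1 := by rw [one_add_one_eq_two, ENNReal.div_self two_ne_zero ENNReal.ofNat_ne_top]
  obtain ⟨a, ha, hua⟩ := hu.exists_rhoVar_div_le_one hp1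
  obtain ⟨b, hb, hvb⟩ := hv.exists_rhoVar_div_le_one hr1
  refine ⟨⟨hv.1.smul hu.1, (2 * a * b)⁻¹, by positivity, ?_⟩, ?_⟩
  · simp_rw [inv_mul_eq_div]
    exact (key a ha b hb hua hvb).trans_lt ENNReal.one_lt_top
  · refine le_mul_luxNorm hv hr1 (mul_nonneg zero_le_two (luxNorm_nonneg p Ω u)) fun b hb hvb => ?_
    rw [mul_right_comm]
    refine le_mul_luxNorm hu hp1 (by positivity) fun a ha hua => ?_
    calc luxNorm q Ω (fun x => v x • u x) ≤ 2 * a * b :=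
          luxNorm_le (by positivity) (key a ha b hb hua hvb)
      _ = 2 * b * a := by ring

theorem stmt1 {X : Type*} [NormedAddCommGroup X] [NormedSpace ℝ X] (Ω : Set ℝ) (hΩ : MeasurableSet Ω)
    (p q r : ℝ → ℝ≥0∞) (hpm : Measurable p) (hqm : Measurable q) (hrm : Measurable r)
    (hp1 : ∀ x, 1 ≤ p x) (hq1 : ∀ x, 1 ≤ q x) (hr1 : ∀ x, 1 ≤ r x)
    (hpqr : ∀ x ∈ Ω, (q x)⁻¹ = (p x)⁻¹ + (r x)⁻¹)
    (u : ℝ → X) (v : ℝ → ℝ) (hu : MemLvar p Ω u) (hv : MemLvar r Ω v) :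
    MemLvar q Ω (fun x => v x • u x) ∧
      luxNorm q Ω (fun x => v x • u x) ≤ 2 * luxNorm p Ω u * luxNorm r Ω v :=
  stmt1_general Ω hΩ p q r hpm hp1 hq1 hr1 hpqr u v hu hv
end
end

section
/- Every almost periodic function f : I → X is Stepanov p(x)-almost periodic for every measurable p : [0,1] → [1,∞]; that is, the map t ↦ f(t+·), I → L^{p(x)}([0,1] : X), is almost periodic, and moreover ‖f‖_{S^{p(x)}} ≤ ‖f‖_∞. -/
open MeasureTheory Set ENNReal Real
noncomputable section

lemma phi_le_one (p : ℝ≥0∞) {t : ℝ} (h0 : 0 ≤ t) (h1 : t ≤ 1) : phiVar p t ≤ 1 := by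
  by_cases h : p = ⊤
  · simp [phiVar, h, h1]
  · rw [phiVar, if_neg h]
    calc ENNReal.ofReal (t ^ p.toReal) ≤ ENNReal.ofReal 1 :=
          ENNReal.ofReal_le_ofReal (Real.rpow_le_one h0 h1 ENNReal.toReal_nonneg)
    _ = 1 := ENNReal.ofReal_one

lemma rho_le_one (p : ℝ → ℝ≥0∞) (g : ℝ → ℝ)
    (hg : ∀ x ∈ Icc (0:ℝ) 1, 0 ≤ g x ∧ g x ≤ 1) :
    rhoVar p (Icc 0 1) g ≤ 1 := by
  unfold rhoVar
  calc ∫⁻ x in Icc (0:ℝ) 1, phiVar (p x) (g x)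
      ≤ ∫⁻ _ in Icc (0:ℝ) 1, 1 := by
        apply lintegral_mono_ae
        filter_upwards [ae_restrict_mem measurableSet_Icc] with x hx
        exact phi_le_one _ (hg x hx).1 (hg x hx).2
    _ = 1 := by simp

lemma luxNorm_le_of_bound {X : Type*} [NormedAddCommGroup X] (p : ℝ → ℝ≥0∞)
    (g : ℝ → X) (M : ℝ) (hM : 0 ≤ M) (hg : ∀ x ∈ Icc (0:ℝ) 1, ‖g x‖ ≤ M) :
    luxNorm p (Icc 0 1) g ≤ M := by
  unfold luxNorm
  apply _root_.le_of_forall_pos_le_add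
  intro ε hε
  have hMε : 0 < M + ε := by linarith
  apply csInf_le ⟨0, fun lam hl => hl.1.le⟩
  refine ⟨hMε, rho_le_one _ _ fun x hx => ?_⟩
  constructor
  · positivity
  · rw [div_le_one hMε]
    exact (hg x hx).trans (by linarith)

theorem stmt7 {X : Type*} [NormedAddCommGroup X]
    (I : Set ℝ) (hI : I = univ ∨ I = Ici 0)
    (p : ℝ → ℝ≥0∞) (hpm : Measurable p) (hp1 : ∀ x, 1 ≤ p x)
    (f : ℝ → X) (hap : AlmostPeriodicOn I f) :
    StepanovAP p I f ∧
      ∀ C : ℝ, (∀ t ∈ I, ‖f t‖ ≤ C) →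
        ∀ t ∈ I, luxNorm p (Icc 0 1) (fun s => f (t + s)) ≤ C := by
  have hIclosed : IsClosed I := by
    rcases hI with h | h <;> rw [h]
    · exact isClosed_univ
    · exact isClosed_Ici
  have hIadd : ∀ t ∈ I, ∀ s : ℝ, 0 ≤ s → t + s ∈ I := by
    rcases hI with h | h <;> rw [h]
    · intro t _ s _; trivial
    · intro t ht s hs; exact add_nonneg ht hs
  -- uniform sup bound implies lux bound, for differences of translates etc.
  have hmem : ∀ t ∈ I, MemLvar p (Icc 0 1) (fun s => f (t + s)) := by
    intro t ht
    have hmaps : MapsTo (fun s : ℝ => t + s) (Icc 0 1) I := fun s hs => hIadd t ht s hs.1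
    have hcont : ContinuousOn (fun s => f (t + s)) (Icc 0 1) :=
      hap.1.comp ((continuous_const.add continuous_id).continuousOn) hmaps
    refine ⟨hcont.aestronglyMeasurable measurableSet_Icc, ?_⟩
    obtain ⟨M, hM⟩ := (isCompact_Icc.image_of_continuousOn hcont).exists_bound_of_continuousOn
      continuousOn_id
    have hM' : ∀ s ∈ Icc (0:ℝ) 1, ‖f (t + s)‖ ≤ max M 1 := by
      intro s hs
      exact le_max_of_le_left (by simpa using hM _ (mem_image_of_mem _ hs))
    have hpos : (0:ℝ) < max M 1 := lt_max_of_lt_right one_pos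
    refine ⟨(max M 1)⁻¹, inv_pos.mpr hpos, lt_of_le_of_lt (rho_le_one _ _ fun x hx => ?_)
      ENNReal.one_lt_top⟩
    constructor
    · positivity
    · calc (max M 1)⁻¹ * ‖f (t + x)‖ ≤ (max M 1)⁻¹ * (max M 1) := by
            exact mul_le_mul_of_nonneg_left (hM' x hx) (by positivity)
      _ = 1 := inv_mul_cancel₀ hpos.ne'
  refine ⟨⟨hmem, ?_, ?_⟩, ?_⟩
  · -- continuity of translates in Luxemburg norm
    intro t ht ε hε
    set K : Set ℝ := Icc (t - 1) (t + 2) ∩ I with hK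
    have hKc : IsCompact K := isCompact_Icc.inter_right hIclosed
    have hfc : ContinuousOn f K := hap.1.mono inter_subset_right
    have huc : UniformContinuousOn f K := hKc.uniformContinuousOn_of_continuous hfc
    rw [Metric.uniformContinuousOn_iff] at huc
    obtain ⟨δ, hδ, hδ'⟩ := huc ε hε
    refine ⟨min δ 1, lt_min hδ one_pos, fun t' ht' hd => ?_⟩
    apply luxNorm_le_of_bound _ _ _ hε.le
    intro s hs
    have hd1 : |t' - t| < 1 := hd.trans_le (min_le_right _ _)
    have hdδ : |t' - t| < δ := hd.trans_le (min_le_left _ _)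
    have habs := abs_lt.mp hd1
    have h1 : t + s ∈ K := ⟨⟨by linarith [hs.1], by linarith [hs.2]⟩, hIadd t ht s hs.1⟩
    have h2 : t' + s ∈ K := ⟨⟨by linarith [hs.1], by linarith [hs.2]⟩, hIadd t' ht' s hs.1⟩
    have : dist (t' + s) (t + s) < δ := by
      rw [Real.dist_eq]; simpa using hdδ
    have := hδ' _ h2 _ h1 this
    rw [dist_eq_norm] at this
    exact this.le
  · -- relative density of ε-translation numbers
    intro ε hε
    obtain ⟨l, hl, hrd⟩ := hap.2 ε hε
    refine ⟨l, hl, fun a ha => ?_⟩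
    obtain ⟨τ, hτ, hτmem⟩ := hrd a ha
    refine ⟨τ, ⟨hτ.1, fun t ht => ?_⟩, hτmem⟩
    apply luxNorm_le_of_bound _ _ _ hε.le
    intro s hs
    have : t + τ + s = (t + s) + τ := by ring
    rw [this]
    exact hτ.2 (t + s) (hIadd t ht s hs.1)
  · -- Stepanov norm bounded by sup norm
    intro C hC t ht
    have hC0 : 0 ≤ C := le_trans (norm_nonneg _) (hC t ht)
    exact luxNorm_le_of_bound _ _ _ hC0 fun s hs => hC _ (hIadd t ht s hs.1)
end
end

section
/- Let p, q : [0,1] → [1,∞] be measurable with p ≤ q a.e. on [0,1]. If f : I → X is Stepanov q(x)-almost periodic, then f is Stepanov p(x)-almost periodic, i.e., APS^{q(x)}(I:X) ↪ APS^{p(x)}(I:X). -/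
open MeasureTheory Set ENNReal Real
noncomputable section

/-! For `p ≤ q` one has `φ_p ≤ φ_q + 1` pointwise (split at `t = 1`), so on a set of measure at
most one the `p`-modular is at most the `q`-modular plus one. Since `p ≥ 1`, halving the argument
at least halves `φ_p`; hence `λ` admissible for the `q`-Luxemburg norm makes `2λ` admissible for
the `p`-one, i.e. `‖g‖_{p(·)} ≤ 2 ‖g‖_{q(·)}`. All three Stepanov conditions are smallness or
membership conditions on translates and their differences, so they pass from `q` to `p`
(with `ε / 2` in place of `ε`). -/

def luxSet {X : Type*} [NormedAddCommGroup X] (p : ℝ → ℝ≥0∞) (Ω : Set ℝ) (f : ℝ → X) :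
    Set ℝ :=
  {lam : ℝ | 0 < lam ∧ rhoVar p Ω (fun x => ‖f x‖ / lam) ≤ 1}

lemma luxNorm_eq_sInf_luxSet {X : Type*} [NormedAddCommGroup X] (p : ℝ → ℝ≥0∞) (Ω : Set ℝ)
    (f : ℝ → X) : luxNorm p Ω f = sInf (luxSet p Ω f) :=
  rfl

section phiVar

variable {p q : ℝ≥0∞} {t : ℝ}

lemma phiVar_mono (ht : 0 ≤ t) {t' : ℝ} (h : t ≤ t') : phiVar p t ≤ phiVar p t' := by
  unfold phiVar
  split_ifs with hp h₁ h₂ h₂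
  · exact le_rfl
  · exact le_top
  · exact absurd (h.trans h₂) h₁
  · exact le_rfl
  · exact ENNReal.ofReal_le_ofReal (Real.rpow_le_rpow ht h ENNReal.toReal_nonneg)

lemma phiVar_le_one (ht₀ : 0 ≤ t) (ht₁ : t ≤ 1) : phiVar p t ≤ 1 := by
  unfold phiVar
  split_ifs
  · exact zero_le_one
  · exact ENNReal.ofReal_le_one.mpr (Real.rpow_le_one ht₀ ht₁ ENNReal.toReal_nonneg)

lemma phiVar_le_phiVar_of_le (hpq : p ≤ q) (ht : 1 < t) : phiVar p t ≤ phiVar q t := by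
  unfold phiVar
  by_cases hq : q = ⊤
  · simp only [hq, if_true, if_neg ht.not_ge]
    exact le_top
  · have hp : p ≠ ⊤ := ne_top_of_le_ne_top hq hpq
    rw [if_neg hp, if_neg hq]
    exact ENNReal.ofReal_le_ofReal
      (Real.rpow_le_rpow_of_exponent_le ht.le (ENNReal.toReal_mono hq hpq))

lemma phiVar_le_phiVar_add_one (hpq : p ≤ q) (ht : 0 ≤ t) : phiVar p t ≤ phiVar q t + 1 := by
  rcases le_or_gt t 1 with h₁ | h₁
  · exact (phiVar_le_one ht h₁).trans le_add_self
  · exact (phiVar_le_phiVar_of_le hpq h₁).trans le_self_add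

lemma phiVar_div_le (hp : 1 ≤ p) (ht : 0 ≤ t) {r : ℝ} (hr : 1 ≤ r) :
    phiVar p (t / r) ≤ phiVar p t / ENNReal.ofReal r := by
  have hr₀ : 0 < r := one_pos.trans_le hr
  unfold phiVar
  by_cases hpt : p = ⊤
  · simp only [hpt, if_true]
    split_ifs with h₁ h₂ h₂
    · exact zero_le
    · exact zero_le
    · exact absurd ((div_le_one hr₀).mpr (h₂.trans hr)) h₁
    · simp [ENNReal.top_div, ENNReal.ofReal_ne_top]
  · have hp₁ : 1 ≤ p.toReal := by
      simpa using ENNReal.toReal_mono hpt hp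
    have hr_le : r ≤ r ^ p.toReal := by
      simpa using Real.rpow_le_rpow_of_exponent_le hr hp₁
    simp only [hpt, if_false]
    calc ENNReal.ofReal ((t / r) ^ p.toReal)
        = ENNReal.ofReal (t ^ p.toReal / r ^ p.toReal) := by rw [Real.div_rpow ht hr₀.le]
      _ ≤ ENNReal.ofReal (t ^ p.toReal / r) :=
          ENNReal.ofReal_le_ofReal
            (div_le_div_of_nonneg_left (Real.rpow_nonneg ht _) hr₀ hr_le)
      _ = ENNReal.ofReal (t ^ p.toReal) / ENNReal.ofReal r := ENNReal.ofReal_div_of_pos hr₀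

end phiVar

lemma measurable_phiVar_s12 : Measurable fun pt : ℝ≥0∞ × ℝ => phiVar pt.1 pt.2 := by
  unfold phiVar
  refine Measurable.ite ?_ ?_ ?_
  · exact measurable_fst (measurableSet_singleton ⊤)
  · exact Measurable.ite (measurable_snd measurableSet_Iic) measurable_const measurable_const
  · exact ENNReal.measurable_ofReal.comp (measurable_snd.pow measurable_fst.ennreal_toReal)

section modular

variable {p q : ℝ → ℝ≥0∞} {Ω : Set ℝ} {g : ℝ → ℝ}

lemma rhoVar_le_rhoVar_add_volume (hpq : ∀ᵐ x ∂(volume.restrict Ω), p x ≤ q x)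
    (hg : ∀ x, 0 ≤ g x) : rhoVar p Ω g ≤ rhoVar q Ω g + volume Ω := by
  unfold rhoVar
  calc ∫⁻ x in Ω, phiVar (p x) (g x)
      ≤ ∫⁻ x in Ω, (phiVar (q x) (g x) + 1) :=
        lintegral_mono_ae (hpq.mono fun x hx => phiVar_le_phiVar_add_one hx (hg x))
    _ = (∫⁻ x in Ω, phiVar (q x) (g x)) + volume Ω := by
        rw [lintegral_add_right _ measurable_const, setLIntegral_const, one_mul]

lemma rhoVar_div_le (hp : ∀ x, 1 ≤ p x) (hg : ∀ x, 0 ≤ g x) {r : ℝ} (hr : 1 ≤ r) :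
    rhoVar p Ω (fun x => g x / r) ≤ rhoVar p Ω g / ENNReal.ofReal r := by
  have hr_inv : (ENNReal.ofReal r)⁻¹ ≠ ⊤ :=
    ENNReal.inv_ne_top.mpr (ENNReal.ofReal_pos.mpr (one_pos.trans_le hr)).ne'
  unfold rhoVar
  calc ∫⁻ x in Ω, phiVar (p x) (g x / r)
      ≤ ∫⁻ x in Ω, phiVar (p x) (g x) * (ENNReal.ofReal r)⁻¹ :=
        lintegral_mono fun x => phiVar_div_le (hp x) (hg x) hr
    _ = (∫⁻ x in Ω, phiVar (p x) (g x)) / ENNReal.ofReal r :=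
        lintegral_mul_const' _ _ hr_inv

end modular

lemma phiVar_le_add_of_le_max {p : ℝ≥0∞} {s u v : ℝ} (hs : 0 ≤ s) (h : s ≤ max u v) :
    phiVar p s ≤ phiVar p u + phiVar p v := by
  rcases le_total u v with huv | huv
  · exact (phiVar_mono hs (h.trans_eq (max_eq_right huv))).trans le_add_self
  · exact (phiVar_mono hs (h.trans_eq (max_eq_left huv))).trans le_self_add

section luxemburg

variable {X : Type*} [NormedAddCommGroup X] {p q : ℝ → ℝ≥0∞} {Ω : Set ℝ} {g : ℝ → X}

lemma two_mul_mem_luxSet (hp : ∀ x, 1 ≤ p x) (hpq : ∀ᵐ x ∂(volume.restrict Ω), p x ≤ q x)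
    (hΩ : volume Ω ≤ 1) {lam : ℝ} (hlam : lam ∈ luxSet q Ω g) : 2 * lam ∈ luxSet p Ω g := by
  obtain ⟨hlam₀, hρ⟩ := hlam
  refine ⟨by positivity, ?_⟩
  have halve : (fun x => ‖g x‖ / (2 * lam)) = fun x => ‖g x‖ / lam / 2 := by
    funext x
    rw [div_div, mul_comm]
  rw [halve]
  calc rhoVar p Ω (fun x => ‖g x‖ / lam / 2)
      ≤ rhoVar p Ω (fun x => ‖g x‖ / lam) / ENNReal.ofReal 2 :=
        rhoVar_div_le hp (fun x => by positivity) one_le_two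
    _ ≤ (rhoVar q Ω (fun x => ‖g x‖ / lam) + volume Ω) / ENNReal.ofReal 2 := by
        gcongr
        exact rhoVar_le_rhoVar_add_volume hpq fun x => by positivity
    _ ≤ (1 + 1) / ENNReal.ofReal 2 := by gcongr
    _ = 1 := by
        rw [one_add_one_eq_two, ENNReal.ofReal_ofNat]
        exact ENNReal.div_self two_ne_zero ofNat_ne_top

lemma luxNorm_le_two_mul_luxNorm (hp : ∀ x, 1 ≤ p x)
    (hpq : ∀ᵐ x ∂(volume.restrict Ω), p x ≤ q x) (hΩ : volume Ω ≤ 1)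
    (hne : (luxSet q Ω g).Nonempty) : luxNorm p Ω g ≤ 2 * luxNorm q Ω g := by
  have hbdd : BddBelow (luxSet p Ω g) := ⟨0, fun _ hlam => hlam.1.le⟩
  rw [luxNorm_eq_sInf_luxSet, luxNorm_eq_sInf_luxSet, ← div_le_iff₀' two_pos]
  exact le_csInf hne fun lam hlam =>
    (div_le_iff₀' two_pos).mpr (csInf_le hbdd (two_mul_mem_luxSet hp hpq hΩ hlam))

lemma MemLvar.luxSet_nonempty (hq : ∀ x, 1 ≤ q x) (hg : MemLvar q Ω g) :
    (luxSet q Ω g).Nonempty := by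
  obtain ⟨-, l, hl, hfin⟩ := hg
  set M := rhoVar q Ω (fun x => l * ‖g x‖)
  set r : ℝ := M.toReal + 1
  have hr : 1 ≤ r := le_add_of_nonneg_left ENNReal.toReal_nonneg
  refine ⟨r / l, by positivity, ?_⟩
  have hscale : (fun x => ‖g x‖ / (r / l)) = fun x => l * ‖g x‖ / r := by
    funext x
    rw [div_div_eq_mul_div, mul_comm]
  rw [hscale]
  calc rhoVar q Ω (fun x => l * ‖g x‖ / r)
      ≤ M / ENNReal.ofReal r := rhoVar_div_le hq (fun x => by positivity) hr
    _ ≤ 1 := by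
        refine ENNReal.div_le_of_le_mul ?_
        rw [one_mul, ← ENNReal.ofReal_toReal hfin.ne]
        exact ENNReal.ofReal_le_ofReal (le_add_of_nonneg_right zero_le_one)

lemma MemLvar.of_exponent_le (hpq : ∀ᵐ x ∂(volume.restrict Ω), p x ≤ q x)
    (hΩ : volume Ω ≠ ⊤) (hg : MemLvar q Ω g) : MemLvar p Ω g := by
  obtain ⟨hm, l, hl, hfin⟩ := hg
  refine ⟨hm, l, hl, ?_⟩
  calc rhoVar p Ω (fun x => l * ‖g x‖)
      ≤ rhoVar q Ω (fun x => l * ‖g x‖) + volume Ω :=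
        rhoVar_le_rhoVar_add_volume hpq fun x => by positivity
    _ < ⊤ := ENNReal.add_lt_top.mpr ⟨hfin, hΩ.lt_top⟩

lemma MemLvar.sub (hq : Measurable q) {g' : ℝ → X} (hg : MemLvar q Ω g)
    (hg' : MemLvar q Ω g') : MemLvar q Ω (fun x => g x - g' x) := by
  obtain ⟨hm, l, hl, hfin⟩ := hg
  obtain ⟨hm', l', hl', hfin'⟩ := hg'
  refine ⟨hm.sub hm', min l l' / 2, by positivity, ?_⟩
  -- `c ‖a - b‖ ≤ c (‖a‖ + ‖b‖) ≤ (l ‖a‖ + l' ‖b‖) / 2` for `c = min l l' / 2`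
  have hmax : ∀ x, min l l' / 2 * ‖g x - g' x‖ ≤ max (l * ‖g x‖) (l' * ‖g' x‖) := fun x => by
    have := norm_sub_le (g x) (g' x)
    have := mul_le_mul_of_nonneg_right (min_le_left l l') (norm_nonneg (g x))
    have := mul_le_mul_of_nonneg_right (min_le_right l l') (norm_nonneg (g' x))
    have := le_max_left (l * ‖g x‖) (l' * ‖g' x‖)
    have := le_max_right (l * ‖g x‖) (l' * ‖g' x‖)
    nlinarith [le_min hl.le hl'.le]
  have hmeas : AEMeasurable (fun x => phiVar (q x) (l * ‖g x‖)) (volume.restrict Ω) :=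
    measurable_phiVar_s12.comp_aemeasurable
      (hq.aemeasurable.prodMk (hm.norm.aemeasurable.const_mul l))
  calc rhoVar q Ω (fun x => min l l' / 2 * ‖g x - g' x‖)
      ≤ ∫⁻ x in Ω, (phiVar (q x) (l * ‖g x‖) + phiVar (q x) (l' * ‖g' x‖)) :=
        lintegral_mono fun x => phiVar_le_add_of_le_max (by positivity) (hmax x)
    _ = rhoVar q Ω (fun x => l * ‖g x‖) + rhoVar q Ω (fun x => l' * ‖g' x‖) :=
        lintegral_add_left' hmeas _
    _ < ⊤ := ENNReal.add_lt_top.mpr ⟨hfin, hfin'⟩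

end luxemburg

lemma add_mem_of_mem_of_pos {I : Set ℝ} (hI : I = univ ∨ I = Ici 0) {t τ : ℝ} (ht : t ∈ I)
    (hτ : 0 < τ) : t + τ ∈ I := by
  rcases hI with rfl | rfl
  · trivial
  · exact add_nonneg ht hτ.le

lemma RelDenseIn.mono {I S T : Set ℝ} (h : RelDenseIn I S) (hST : S ⊆ T) : RelDenseIn I T := by
  obtain ⟨l, hl, hS⟩ := h
  exact ⟨l, hl, fun a ha => (hS a ha).mono (inter_subset_inter_left _ hST)⟩

theorem stmt12_general {X : Type*} [NormedAddCommGroup X]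
    (I : Set ℝ) (hI : I = univ ∨ I = Ici 0)
    (p q : ℝ → ℝ≥0∞) (hqm : Measurable q)
    (hp1 : ∀ x, 1 ≤ p x) (hq1 : ∀ x, 1 ≤ q x)
    (hpq : ∀ᵐ x ∂(volume.restrict (Icc (0:ℝ) 1)), p x ≤ q x)
    (f : ℝ → X) (hf : StepanovAP q I f) :
    StepanovAP p I f := by
  obtain ⟨hmem, hcont, hap⟩ := hf
  have hvol : volume (Icc (0:ℝ) 1) = 1 := by simp
  have hsmall : ∀ t₁ ∈ I, ∀ t₂ ∈ I, ∀ ε,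
      luxNorm q (Icc 0 1) (fun s => f (t₁ + s) - f (t₂ + s)) ≤ ε / 2 →
      luxNorm p (Icc 0 1) (fun s => f (t₁ + s) - f (t₂ + s)) ≤ ε := fun t₁ h₁ t₂ h₂ ε hq =>
    calc _ ≤ 2 * luxNorm q (Icc 0 1) (fun s => f (t₁ + s) - f (t₂ + s)) :=
          luxNorm_le_two_mul_luxNorm hp1 hpq hvol.le
            (((hmem t₁ h₁).sub hqm (hmem t₂ h₂)).luxSet_nonempty hq1)
      _ ≤ ε := by linarith
  refine ⟨fun t ht => (hmem t ht).of_exponent_le hpq (by simp [hvol]), ?_, fun ε hε => ?_⟩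
  · intro t ht ε hε
    obtain ⟨δ, hδ, hδε⟩ := hcont t ht (ε / 2) (half_pos hε)
    exact ⟨δ, hδ, fun t' ht' hlt => hsmall t' ht' t ht ε (hδε t' ht' hlt)⟩
  · exact (hap (ε / 2) (half_pos hε)).mono fun τ ⟨hτ, hτε⟩ =>
      ⟨hτ, fun t ht => hsmall _ (add_mem_of_mem_of_pos hI ht hτ) t ht ε (hτε t ht)⟩

theorem stmt12 {X : Type*} [NormedAddCommGroup X]
    (I : Set ℝ) (hI : I = univ ∨ I = Ici 0)
    (p q : ℝ → ℝ≥0∞) (hpm : Measurable p) (hqm : Measurable q)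
    (hp1 : ∀ x, 1 ≤ p x) (hq1 : ∀ x, 1 ≤ q x)
    (hpq : ∀ᵐ x ∂(volume.restrict (Icc (0:ℝ) 1)), p x ≤ q x)
    (f : ℝ → X) (hf : StepanovAP q I f) :
    StepanovAP p I f :=
  stmt12_general I hI p q hqm hp1 hq1 hpq f hf
end
end

section
/- Let F(t) = sign(sin t + sin(√2 t)) (with sign(0) := 0) and p(x) = 1 − ln x for x ∈ (0,1]. For every λ ∈ (0, 2/e), every l > 0, and every interval I ⊆ ℝ∖{0} of length l, for every τ ∈ I there exists t ∈ ℝ such that ∫₀¹ (1/λ)^{1−ln x} |F(x+t+τ) − F(x+t)|^{1−ln x} dx = ∞. Consequently F is not Stepanov p(x)-almost periodic. -/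
open MeasureTheory Set ENNReal Real
noncomputable section

open Filter Topology

-- ===== auxiliary lemmas =====

def gg (t : ℝ) : ℝ := Real.sin t + Real.sin (Real.sqrt 2 * t)
def aa : ℝ := (1 + Real.sqrt 2) / 2
def bb : ℝ := (Real.sqrt 2 - 1) / 2

lemma sqrt2_lt : (1:ℝ) < Real.sqrt 2 := by
  have : Real.sqrt 1 < Real.sqrt 2 := Real.sqrt_lt_sqrt (by norm_num) (by norm_num)
  simpa using this

lemma aa_pos : 0 < aa := by unfold aa; linarith [sqrt2_lt]
lemma bb_pos : 0 < bb := by unfold bb; linarith [sqrt2_lt]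

lemma sqrt2_lin (p q : ℤ) (h : Real.sqrt 2 * p = q) : p = 0 ∧ q = 0 := by
  by_cases hp : p = 0
  · refine ⟨hp, ?_⟩
    subst hp
    simp at h
    exact_mod_cast h.symm
  · exfalso
    have hp' : (p:ℝ) ≠ 0 := Int.cast_ne_zero.2 hp
    have : Real.sqrt 2 = ((q / p : ℚ) : ℝ) := by
      push_cast
      field_simp at h ⊢
      linarith
    exact irrational_sqrt_two ⟨_, this.symm⟩

lemma ggid (t : ℝ) : gg t = 2 * Real.sin (aa * t) * Real.cos (bb * t) := by
  have h1 : t = aa * t - bb * t := by unfold aa bb; ring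
  have h2 : Real.sqrt 2 * t = aa * t + bb * t := by unfold aa bb; ring
  unfold gg
  rw [h2]
  nth_rewrite 1 [h1]
  rw [Real.sin_add, Real.sin_sub]
  ring

lemma zeros_char (z : ℝ) : gg z = 0 ↔ Real.sin (aa * z) = 0 ∨ Real.cos (bb * z) = 0 := by
  rw [ggid]
  constructor
  · intro h
    rcases mul_eq_zero.1 h with h | h
    · rcases mul_eq_zero.1 h with h | h
      · norm_num at h
      · exact Or.inl h
    · exact Or.inr h
  · rintro (h | h) <;> simp [h]

lemma not_both (z : ℝ) : ¬ (Real.sin (aa * z) = 0 ∧ Real.cos (bb * z) = 0) := by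
  rintro ⟨hs, hc⟩
  rw [Real.sin_eq_zero_iff] at hs
  rw [Real.cos_eq_zero_iff] at hc
  obtain ⟨k, hk⟩ := hs
  obtain ⟨m, hm⟩ := hc
  by_cases hz : z = 0
  · subst hz
    simp at hm
    have : (2 * (m:ℝ) + 1) * π = 0 := by linarith
    rcases mul_eq_zero.1 this with h | h
    · have : (2*m+1 : ℤ) = 0 := by exact_mod_cast h
      omega
    · exact Real.pi_ne_zero h
  · have key : (2*(m:ℝ)+1) * (aa * z) = 2*(k:ℝ) * (bb * z) := by
      rw [← hk, hm]; ring
    have hz' : (z:ℝ) ≠ 0 := hz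
    have key2 : (2*(m:ℝ)+1) * aa = 2*(k:ℝ) * bb := by
      have key' : ((2*(m:ℝ)+1) * aa) * z = (2*(k:ℝ) * bb) * z := by linarith [key]
      exact mul_right_cancel₀ hz' key'
    unfold aa bb at key2
    have : Real.sqrt 2 * ((2*m+1-2*k : ℤ) : ℝ) = ((-(2*k)-(2*m+1) : ℤ) : ℝ) := by
      push_cast
      nlinarith [key2]
    obtain ⟨h1, h2⟩ := sqrt2_lin _ _ this
    omega

def DD (z : ℝ) : ℝ :=
  2 * (Real.cos (aa * z) * aa) * Real.cos (bb * z) +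
    2 * Real.sin (aa * z) * (-Real.sin (bb * z) * bb)

lemma gderiv (z : ℝ) : HasDerivAt gg (DD z) z := by
  have ia : HasDerivAt (fun t : ℝ => aa * t) aa z := by
    simpa using (hasDerivAt_id z).const_mul aa
  have ib : HasDerivAt (fun t : ℝ => bb * t) bb z := by
    simpa using (hasDerivAt_id z).const_mul bb
  have h1 : HasDerivAt (fun t : ℝ => Real.sin (aa * t)) (Real.cos (aa * z) * aa) z := ia.sin
  have h2 : HasDerivAt (fun t : ℝ => Real.cos (bb * t)) (-Real.sin (bb * z) * bb) z := ib.cos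
  have h3 := (h1.const_mul 2).mul h2
  have h4 : HasDerivAt (fun t : ℝ => 2 * Real.sin (aa * t) * Real.cos (bb * t)) (DD z) z := by
    unfold DD
    exact h3
  exact h4.congr_of_eventuallyEq (Filter.Eventually.of_forall fun t => ggid t)

lemma deriv_ne (z : ℝ) (h0 : gg z = 0) : DD z ≠ 0 := by
  rcases (zeros_char z).1 h0 with h | h
  · have hc : Real.cos (aa * z) ≠ 0 := by
      intro hcc
      have := Real.sin_sq_add_cos_sq (aa * z)
      rw [h, hcc] at this; norm_num at this
    have hcb : Real.cos (bb * z) ≠ 0 := fun hh => not_both z ⟨h, hh⟩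
    unfold DD
    rw [h]
    simp only [mul_zero, zero_mul, add_zero]
    exact mul_ne_zero (mul_ne_zero (by norm_num) (mul_ne_zero hc (ne_of_gt aa_pos))) hcb
  · have hs : Real.sin (bb * z) ≠ 0 := by
      intro hss
      have := Real.sin_sq_add_cos_sq (bb * z)
      rw [h, hss] at this; norm_num at this
    have hsa : Real.sin (aa * z) ≠ 0 := fun hh => not_both z ⟨hh, h⟩
    unfold DD
    rw [h]
    simp only [mul_zero, zero_mul, zero_add]
    exact mul_ne_zero (mul_ne_zero (by norm_num) hsa)
      (mul_ne_zero (neg_ne_zero.2 hs) (ne_of_gt bb_pos))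

lemma signchange (z : ℝ) (h0 : gg z = 0) :
    ∀ δ > (0:ℝ), ∃ u v : ℝ, |u - z| < δ ∧ |v - z| < δ ∧ gg u < 0 ∧ 0 < gg v := by
  intro δ hδ
  have hd := gderiv z
  rw [hasDerivAt_iff_tendsto_slope] at hd
  have hne := deriv_ne z h0
  have key : ∃ r : ℝ, 0 < r ∧ r < δ ∧
      ((0 < DD z → 0 < slope gg z (z + r) ∧ 0 < slope gg z (z - r)) ∧
       (DD z < 0 → slope gg z (z + r) < 0 ∧ slope gg z (z - r) < 0)) := by
    rcases hne.lt_or_gt with hneg | hpos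
    · have ev : ∀ᶠ x in 𝓝[≠] z, slope gg z x < 0 := hd.eventually (gt_mem_nhds hneg)
      rw [eventually_nhdsWithin_iff, Metric.eventually_nhds_iff] at ev
      obtain ⟨ε, hε, hev⟩ := ev
      refine ⟨min (ε/2) (δ/2), lt_min (by linarith) (by linarith),
        lt_of_le_of_lt (min_le_right _ _) (by linarith), ?_, ?_⟩
      · intro h; exact absurd h (not_lt.2 hneg.le)
      · intro _
        set r := min (ε/2) (δ/2)
        have hrpos : 0 < r := lt_min (by linarith) (by linarith)
        have hrε : r < ε := lt_of_le_of_lt (min_le_left _ _) (by linarith)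
        constructor
        · exact hev (by rw [Real.dist_eq, show z + r - z = r by ring, abs_of_pos hrpos]; exact hrε)
            (by simp [ne_of_gt hrpos])
        · exact hev (by rw [Real.dist_eq, show z - r - z = -r by ring, abs_neg, abs_of_pos hrpos]; exact hrε)
            (by simp; intro h; linarith)
    · have ev : ∀ᶠ x in 𝓝[≠] z, 0 < slope gg z x := hd.eventually (lt_mem_nhds hpos)
      rw [eventually_nhdsWithin_iff, Metric.eventually_nhds_iff] at ev
      obtain ⟨ε, hε, hev⟩ := ev
      refine ⟨min (ε/2) (δ/2), lt_min (by linarith) (by linarith),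
        lt_of_le_of_lt (min_le_right _ _) (by linarith), ?_, ?_⟩
      · intro _
        set r := min (ε/2) (δ/2)
        have hrpos : 0 < r := lt_min (by linarith) (by linarith)
        have hrε : r < ε := lt_of_le_of_lt (min_le_left _ _) (by linarith)
        constructor
        · exact hev (by rw [Real.dist_eq, show z + r - z = r by ring, abs_of_pos hrpos]; exact hrε)
            (by simp [ne_of_gt hrpos])
        · exact hev (by rw [Real.dist_eq, show z - r - z = -r by ring, abs_neg, abs_of_pos hrpos]; exact hrε)
            (by simp; intro h; linarith)
      · intro h; exact absurd h (not_lt.2 hpos.le)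
  obtain ⟨r, hrpos, hrδ, hplus, hminus⟩ := key
  have habs1 : |z + r - z| < δ := by rw [show z + r - z = r by ring, abs_of_pos hrpos]; exact hrδ
  have habs2 : |z - r - z| < δ := by
    rw [show z - r - z = -r by ring, abs_neg, abs_of_pos hrpos]; exact hrδ
  have hsp : slope gg z (z + r) = gg (z + r) / r := by
    rw [slope_def_field, h0, show z + r - z = r by ring, sub_zero]
  have hsm : slope gg z (z - r) = gg (z - r) / (-r) := by
    rw [slope_def_field, h0, show z - r - z = -r by ring, sub_zero]
  rcases hne.lt_or_gt with hneg | hpos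
  · obtain ⟨h1, h2⟩ := hminus hneg
    rw [hsp] at h1; rw [hsm] at h2
    refine ⟨z + r, z - r, habs1, habs2, ?_, ?_⟩
    · rcases div_neg_iff.1 h1 with ⟨_, hb⟩ | ⟨ha, _⟩
      · linarith
      · exact ha
    · rcases div_neg_iff.1 h2 with ⟨ha, hb⟩ | ⟨ha, hb⟩
      · linarith
      · linarith
  · obtain ⟨h1, h2⟩ := hplus hpos
    rw [hsp] at h1; rw [hsm] at h2
    refine ⟨z - r, z + r, habs2, habs1, ?_, ?_⟩
    · rcases div_pos_iff.1 h2 with ⟨ha, hb⟩ | ⟨ha, hb⟩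
      · linarith
      · exact ha
    · rcases div_pos_iff.1 h1 with ⟨ha, hb⟩ | ⟨ha, hb⟩
      · exact ha
      · linarith

lemma ggcont : Continuous gg := by
  unfold gg
  fun_prop

lemma loc_pos {w : ℝ} (h : 0 < gg w) : ∃ δ > (0:ℝ), ∀ y, |y - w| < δ → 0 < gg y := by
  have := (ggcont.tendsto w).eventually (lt_mem_nhds h)
  rw [Metric.eventually_nhds_iff] at this
  obtain ⟨ε, hε, hev⟩ := this
  exact ⟨ε, hε, fun y hy => hev (by rwa [Real.dist_eq])⟩

lemma loc_neg {w : ℝ} (h : gg w < 0) : ∃ δ > (0:ℝ), ∀ y, |y - w| < δ → gg y < 0 := by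
  have := (ggcont.tendsto w).eventually (gt_mem_nhds h)
  rw [Metric.eventually_nhds_iff] at this
  obtain ⟨ε, hε, hev⟩ := this
  exact ⟨ε, hε, fun y hy => hev (by rwa [Real.dist_eq])⟩

lemma zero_shift {τ : ℝ} (Hsign : ∀ s : ℝ, 0 ≤ gg s * gg (s + τ)) {z : ℝ} (h0 : gg z = 0) :
    gg (z + τ) = 0 := by
  rcases lt_trichotomy (gg (z + τ)) 0 with h | h | h
  · obtain ⟨δ, hδ, hloc⟩ := loc_neg h
    obtain ⟨u, v, hu, hv, hgu, hgv⟩ := signchange z h0 δ hδ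
    have : gg (v + τ) < 0 := hloc _ (by rw [show v + τ - (z + τ) = v - z by ring]; exact hv)
    exact absurd (Hsign v) (not_le.2 (mul_neg_of_pos_of_neg hgv this))
  · exact h
  · obtain ⟨δ, hδ, hloc⟩ := loc_pos h
    obtain ⟨u, v, hu, hv, hgu, hgv⟩ := signchange z h0 δ hδ
    have : 0 < gg (u + τ) := hloc _ (by rw [show u + τ - (z + τ) = u - z by ring]; exact hu)
    exact absurd (Hsign u) (not_le.2 (mul_neg_of_neg_of_pos hgu this))

lemma L1 {τ : ℝ} (hτ : τ ≠ 0) : ∃ t : ℝ, gg t * gg (t + τ) < 0 := by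
  by_contra hcon
  push_neg at hcon
  have Hsign : ∀ s : ℝ, 0 ≤ gg s * gg (s + τ) := hcon
  have hπ := Real.pi_ne_zero
  have haa : aa ≠ 0 := aa_pos.ne'
  have hbb : bb ≠ 0 := bb_pos.ne'
  have haaτ : aa * τ ≠ 0 := mul_ne_zero haa hτ
  have hbbτ : bb * τ ≠ 0 := mul_ne_zero hbb hτ
  set z1 : ℝ := π / aa with hz1def
  have haz1 : aa * z1 = π := by rw [hz1def]; field_simp
  set w0 : ℝ := π / 2 / bb with hw0def
  set w1 : ℝ := 3 * π / 2 / bb with hw1def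
  have hbw0 : bb * w0 = π / 2 := by rw [hw0def, mul_comm, div_mul_cancel₀ _ hbb]
  have hbw1 : bb * w1 = 3 * π / 2 := by rw [hw1def, mul_comm, div_mul_cancel₀ _ hbb]
  have hz0 : gg 0 = 0 := by unfold gg; simp
  have hz1 : gg z1 = 0 := (zeros_char z1).2 (Or.inl (by rw [haz1]; exact Real.sin_pi))
  have hw0z : gg w0 = 0 := (zeros_char w0).2 (Or.inr (by rw [hbw0]; exact Real.cos_pi_div_two))
  have hw1z : gg w1 = 0 :=
    (zeros_char w1).2 (Or.inr (by
      rw [hbw1, Real.cos_eq_zero_iff]; exact ⟨1, by push_cast; ring⟩))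
  have s0 := zero_shift Hsign hz0
  rw [zero_add] at s0
  have s1 := zero_shift Hsign hz1
  have sw0 := zero_shift Hsign hw0z
  have sw1 := zero_shift Hsign hw1z
  rw [zeros_char] at s0 s1 sw0 sw1
  have hA : ∃ j : ℤ, j ≠ 0 ∧ aa * τ = j * π := by
    rcases s0 with h0 | h0
    · rw [Real.sin_eq_zero_iff] at h0
      obtain ⟨n, hn⟩ := h0
      refine ⟨n, ?_, hn.symm⟩
      rintro rfl
      push_cast at hn
      exact haaτ (by linarith)
    rcases s1 with h1 | h1
    · rw [Real.sin_eq_zero_iff] at h1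
      obtain ⟨n, hn⟩ := h1
      have hn' : (n:ℝ) * π = π + aa * τ := by
        rw [mul_add, haz1] at hn; exact hn
      refine ⟨n - 1, ?_, by push_cast; linear_combination -hn'⟩
      intro hh
      have : n = 1 := by omega
      subst this
      push_cast at hn'
      exact haaτ (by linarith)
    · exfalso
      rw [Real.cos_eq_zero_iff] at h0 h1
      obtain ⟨m0, hm0⟩ := h0
      obtain ⟨m1, hm1⟩ := h1
      have f3 : bb * z1 = ((m1:ℝ) - m0) * π := by
        linear_combination hm1 - hm0
      have f4 : bb * π = (((m1:ℝ) - m0) * aa) * π := by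
        linear_combination aa * f3 - bb * haz1
      have f5 : bb = ((m1:ℝ) - m0) * aa := mul_right_cancel₀ hπ f4
      unfold aa bb at f5
      have key : Real.sqrt 2 * ((1 - (m1 - m0) : ℤ) : ℝ) = ((1 + (m1 - m0) : ℤ) : ℝ) := by
        push_cast
        linear_combination 2 * f5
      obtain ⟨p1, p2⟩ := sqrt2_lin _ _ key
      omega
  have hB : ∃ m : ℤ, m ≠ 0 ∧ bb * τ = m * π := by
    rcases sw0 with h0 | h0; swap
    · rw [Real.cos_eq_zero_iff] at h0
      obtain ⟨m, hm⟩ := h0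
      have hm' : π / 2 + bb * τ = (2 * (m:ℝ) + 1) * π / 2 := by
        rw [mul_add, hbw0] at hm; exact hm
      refine ⟨m, ?_, by push_cast; linear_combination hm'⟩
      rintro rfl
      push_cast at hm'
      exact hbbτ (by linarith)
    rcases sw1 with h1 | h1; swap
    · rw [Real.cos_eq_zero_iff] at h1
      obtain ⟨m, hm⟩ := h1
      have hm' : 3 * π / 2 + bb * τ = (2 * (m:ℝ) + 1) * π / 2 := by
        rw [mul_add, hbw1] at hm; exact hm
      refine ⟨m - 1, ?_, by push_cast; linear_combination hm'⟩
      intro hh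
      have : m = 1 := by omega
      subst this
      push_cast at hm'
      exact hbbτ (by linarith)
    · exfalso
      rw [Real.sin_eq_zero_iff] at h0 h1
      obtain ⟨n0, hn0⟩ := h0
      obtain ⟨n1, hn1⟩ := h1
      have f3 : aa * w1 - aa * w0 = ((n1:ℝ) - n0) * π := by
        linear_combination hn1.symm - hn0.symm
      have hww : bb * w1 - bb * w0 = π := by linear_combination hbw1 - hbw0
      have f4 : aa * π = (((n1:ℝ) - n0) * bb) * π := by
        linear_combination bb * f3 - aa * hww
      have f5 : aa = ((n1:ℝ) - n0) * bb := mul_right_cancel₀ hπ f4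
      unfold aa bb at f5
      have key : Real.sqrt 2 * ((1 - (n1 - n0) : ℤ) : ℝ) = ((-1 - (n1 - n0) : ℤ) : ℝ) := by
        push_cast
        linear_combination 2 * f5
      obtain ⟨p1, p2⟩ := sqrt2_lin _ _ key
      omega
  obtain ⟨j, hj0, hj⟩ := hA
  obtain ⟨m, hm0, hm⟩ := hB
  have hmajb : (m:ℝ) * aa = (j:ℝ) * bb := by
    have h' : ((m:ℝ) * aa) * τ = ((j:ℝ) * bb) * τ := by
      linear_combination (m:ℝ) * hj - (j:ℝ) * hm
    exact mul_right_cancel₀ hτ h'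
  unfold aa bb at hmajb
  have key : Real.sqrt 2 * ((m - j : ℤ) : ℝ) = ((-j - m : ℤ) : ℝ) := by
    push_cast
    linear_combination 2 * hmajb
  obtain ⟨p1, p2⟩ := sqrt2_lin _ _ key
  omega

lemma sign_diff_eq_two {A B : ℝ} (h : A * B < 0) :
    |Real.sign B - Real.sign A| = 2 := by
  rcases mul_neg_iff.1 h with ⟨ha, hb⟩ | ⟨ha, hb⟩
  · rw [Real.sign_of_pos ha, Real.sign_of_neg hb]
    norm_num
  · rw [Real.sign_of_neg ha, Real.sign_of_pos hb]
    norm_num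

lemma core {τ : ℝ} (hτ : τ ≠ 0) :
    ∃ t : ℝ, ∃ δ : ℝ, 0 < δ ∧ δ ≤ 1 ∧
      ∀ x ∈ Ioc (0:ℝ) δ, |Real.sign (gg (x + t + τ)) - Real.sign (gg (x + t))| = 2 := by
  obtain ⟨t, ht⟩ := L1 hτ
  have key : ∀ w : ℝ, gg w ≠ 0 → ∃ δ > (0:ℝ), ∀ y, |y - w| < δ → gg y * gg w > 0 := by
    intro w hw
    rcases hw.lt_or_gt with h | h
    · obtain ⟨δ, hδ, hl⟩ := loc_neg h
      exact ⟨δ, hδ, fun y hy => mul_pos_of_neg_of_neg (hl y hy) h⟩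
    · obtain ⟨δ, hδ, hl⟩ := loc_pos h
      exact ⟨δ, hδ, fun y hy => mul_pos (hl y hy) h⟩
  have h1ne : gg t ≠ 0 := fun h => by rw [h] at ht; simp at ht
  have h2ne : gg (t + τ) ≠ 0 := fun h => by rw [h] at ht; simp at ht
  obtain ⟨δ1, hδ1, h1⟩ := key t h1ne
  obtain ⟨δ2, hδ2, h2⟩ := key (t + τ) h2ne
  refine ⟨t, min (min (δ1/2) (δ2/2)) 1, by positivity, min_le_right _ _, ?_⟩
  intro x hx
  have hx1 : x < δ1 := by
    calc x ≤ min (min (δ1/2) (δ2/2)) 1 := hx.2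
    _ ≤ δ1/2 := le_trans (min_le_left _ _) (min_le_left _ _)
    _ < δ1 := by linarith
  have hx2 : x < δ2 := by
    calc x ≤ min (min (δ1/2) (δ2/2)) 1 := hx.2
    _ ≤ δ2/2 := le_trans (min_le_left _ _) (min_le_right _ _)
    _ < δ2 := by linarith
  have k1 : gg (x + t) * gg t > 0 :=
    h1 _ (by rw [show x + t - t = x by ring, abs_of_pos hx.1]; exact hx1)
  have k2 : gg (x + t + τ) * gg (t + τ) > 0 :=
    h2 _ (by rw [show x + t + τ - (t + τ) = x by ring, abs_of_pos hx.1]; exact hx2)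
  apply sign_diff_eq_two
  nlinarith [k1, k2, ht, sq_nonneg (gg t), sq_nonneg (gg (t+τ))]

lemma base_bound {c x : ℝ} (hc : Real.exp 1 ≤ c) (hx : 0 < x) (hx1 : x ≤ 1) :
    x⁻¹ ≤ c ^ (1 - Real.log x) := by
  have hc0 : (0:ℝ) < c := lt_of_lt_of_le (Real.exp_pos 1) hc
  have hlogc : 1 ≤ Real.log c := by
    rw [Real.le_log_iff_exp_le hc0]
    exact hc
  have hlx : Real.log x ≤ 0 := Real.log_nonpos hx.le hx1
  rw [Real.rpow_def_of_pos hc0]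
  rw [show x⁻¹ = Real.exp (-(Real.log x)) by rw [Real.exp_neg, Real.exp_log hx]]
  apply Real.exp_le_exp.2
  nlinarith

lemma lint_inv_top {δ : ℝ} (hδ : 0 < δ) :
    (∫⁻ x in Ioc (0:ℝ) δ, ENNReal.ofReal x⁻¹) = ⊤ := by
  by_contra h
  have hfin : (∫⁻ x in Ioc (0:ℝ) δ, ENNReal.ofReal x⁻¹) < ⊤ := lt_top_iff_ne_top.2 h
  have hmeas : AEStronglyMeasurable (fun x : ℝ => x⁻¹) (volume.restrict (Ioc (0:ℝ) δ)) :=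
    (measurable_inv : Measurable fun x : ℝ => x⁻¹).aestronglyMeasurable
  have hnn : 0 ≤ᵐ[volume.restrict (Ioc (0:ℝ) δ)] fun x : ℝ => x⁻¹ := by
    rw [EventuallyLE, ae_restrict_iff' measurableSet_Ioc]
    exact Filter.Eventually.of_forall fun x hx => inv_nonneg.2 hx.1.le
  have hint : IntegrableOn (fun x : ℝ => x⁻¹) (Ioc (0:ℝ) δ) := by
    refine ⟨hmeas, ?_⟩
    rw [hasFiniteIntegral_iff_ofReal hnn]
    exact hfin
  have hint2 : IntegrableOn (fun x : ℝ => x ^ (-1 : ℝ)) (Ioo (0:ℝ) δ) := by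
    apply (hint.mono_set Ioo_subset_Ioc_self).congr_fun ?_ measurableSet_Ioo
    intro x hx
    exact (Real.rpow_neg_one x).symm
  rw [intervalIntegral.integrableOn_Ioo_rpow_iff hδ] at hint2
  linarith

lemma two_div_e_gt_half : (1:ℝ)/2 < 2 / Real.exp 1 := by
  have h1 := Real.exp_one_lt_d9
  have h2 := Real.exp_pos 1
  rw [div_lt_div_iff₀ (by norm_num) h2]
  nlinarith

lemma exp_le_two_div {lam : ℝ} (h0 : 0 < lam) (h1 : lam < 2 / Real.exp 1) :
    Real.exp 1 ≤ 2 / lam := by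
  have h2 := Real.exp_pos 1
  rw [le_div_iff₀ h0]
  rw [lt_div_iff₀ h2] at h1
  linarith

-- ===== end auxiliary lemmas =====

lemma sign_abs_le (y : ℝ) : |Real.sign y| ≤ 1 := by
  rcases lt_trichotomy y 0 with h | h | h
  · rw [Real.sign_of_neg h]; norm_num
  · rw [h, Real.sign_zero]; norm_num
  · rw [Real.sign_of_pos h]; norm_num

theorem stmt15 :
    (∀ lam : ℝ, lam ∈ Ioo 0 (2 / Real.exp 1) → ∀ l > (0:ℝ), ∀ a : ℝ,
        (0:ℝ) ∉ Icc a (a + l) → ∀ τ ∈ Icc a (a + l), ∃ t : ℝ,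
        (∫⁻ x in Ioc (0:ℝ) 1,
            ENNReal.ofReal ((1 / lam) ^ (1 - Real.log x)) *
              ENNReal.ofReal
                (|Real.sign (Real.sin (x + t + τ) + Real.sin (Real.sqrt 2 * (x + t + τ))) -
                    Real.sign (Real.sin (x + t) + Real.sin (Real.sqrt 2 * (x + t)))| ^
                  (1 - Real.log x))) = ⊤) ∧
    ¬ StepanovAP (fun x => ENNReal.ofReal (1 - Real.log x)) univ
        (fun t => Real.sign (Real.sin t + Real.sin (Real.sqrt 2 * t))) := by
  constructor
  · intro lam hlam l hl a ha τ hτmem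
    have hτ0 : τ ≠ 0 := fun h => ha (h ▸ hτmem)
    obtain ⟨t, δ, hδ0, hδ1, hsd⟩ := core hτ0
    refine ⟨t, ?_⟩
    rw [eq_top_iff]
    have step1 : (⊤:ℝ≥0∞) = ∫⁻ x in Ioc (0:ℝ) δ, ENNReal.ofReal x⁻¹ := (lint_inv_top hδ0).symm
    rw [step1]
    have step2 : (∫⁻ x in Ioc (0:ℝ) δ, ENNReal.ofReal x⁻¹) ≤
        ∫⁻ x in Ioc (0:ℝ) δ,
          ENNReal.ofReal ((1 / lam) ^ (1 - Real.log x)) *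
            ENNReal.ofReal
              (|Real.sign (Real.sin (x + t + τ) + Real.sin (Real.sqrt 2 * (x + t + τ))) -
                  Real.sign (Real.sin (x + t) + Real.sin (Real.sqrt 2 * (x + t)))| ^
                (1 - Real.log x)) := by
      apply setLIntegral_mono' measurableSet_Ioc
      intro x hx
      have h2 : |Real.sign (Real.sin (x + t + τ) + Real.sin (Real.sqrt 2 * (x + t + τ))) -
          Real.sign (Real.sin (x + t) + Real.sin (Real.sqrt 2 * (x + t)))| = 2 := hsd x hx
      rw [h2]
      have hlam0 : (0:ℝ) < lam := hlam.1
      have h1lam : (0:ℝ) ≤ 1 / lam := by positivity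
      rw [← ENNReal.ofReal_mul (Real.rpow_nonneg h1lam _)]
      rw [← Real.mul_rpow h1lam (by norm_num)]
      rw [show (1 / lam) * 2 = 2 / lam by ring]
      exact ENNReal.ofReal_le_ofReal
        (base_bound (exp_le_two_div hlam.1 hlam.2) hx.1 (le_trans hx.2 hδ1))
    exact le_trans step2 (lintegral_mono_set (Ioc_subset_Ioc_right hδ1))
  · rintro ⟨hmem, hcont, hap⟩
    obtain ⟨l, hl, hrel⟩ := hap (1/2) (by norm_num)
    obtain ⟨τ, hτS, hτIcc⟩ := hrel l (subset_univ _)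
    obtain ⟨hτpos, hτnorm⟩ := hτS
    have hτ0 : τ ≠ 0 := ne_of_gt hτpos
    obtain ⟨t, δ, hδ0, hδ1, hsd⟩ := core hτ0
    have hnorm := hτnorm t (mem_univ t)
    -- claim 1 : lam = 2 is admissible
    have claim1 : rhoVar (fun x => ENNReal.ofReal (1 - Real.log x)) (Icc 0 1)
        (fun x => ‖Real.sign (gg (t + τ + x)) - Real.sign (gg (t + x))‖ / 2) ≤ 1 := by
      unfold rhoVar
      have hb : ∀ x ∈ Icc (0:ℝ) 1,
          phiVar (ENNReal.ofReal (1 - Real.log x))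
            (‖Real.sign (gg (t + τ + x)) - Real.sign (gg (t + x))‖ / 2) ≤ 1 := by
        intro x hx
        have hne : (ENNReal.ofReal (1 - Real.log x)) ≠ ⊤ := ENNReal.ofReal_ne_top
        unfold phiVar
        rw [if_neg hne]
        have hle : ‖Real.sign (gg (t + τ + x)) - Real.sign (gg (t + x))‖ / 2 ≤ 1 := by
          rw [Real.norm_eq_abs]
          have := abs_sub (Real.sign (gg (t + τ + x))) (Real.sign (gg (t + x)))
          have h1 := sign_abs_le (gg (t + τ + x))
          have h2 := sign_abs_le (gg (t + x))
          have h3 : |Real.sign (gg (t + τ + x)) - Real.sign (gg (t + x))| ≤ 2 := by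
            calc |Real.sign (gg (t + τ + x)) - Real.sign (gg (t + x))|
                ≤ |Real.sign (gg (t + τ + x))| + |Real.sign (gg (t + x))| := abs_sub _ _
            _ ≤ 2 := by linarith
          linarith
        calc ENNReal.ofReal ((‖Real.sign (gg (t + τ + x)) - Real.sign (gg (t + x))‖ / 2) ^
              (ENNReal.ofReal (1 - Real.log x)).toReal)
            ≤ ENNReal.ofReal 1 :=
              ENNReal.ofReal_le_ofReal
                (Real.rpow_le_one (by positivity) hle ENNReal.toReal_nonneg)
        _ = 1 := ENNReal.ofReal_one
      calc (∫⁻ x in Icc (0:ℝ) 1, phiVar (ENNReal.ofReal (1 - Real.log x))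
            (‖Real.sign (gg (t + τ + x)) - Real.sign (gg (t + x))‖ / 2))
          ≤ ∫⁻ _ in Icc (0:ℝ) 1, 1 := setLIntegral_mono' measurableSet_Icc hb
      _ = 1 := by
          rw [setLIntegral_const]
          simp [Real.volume_Icc]
    -- claim 2 : any admissible lam is ≥ 2/e
    have claim2 : ∀ lamb : ℝ, 0 < lamb →
        rhoVar (fun x => ENNReal.ofReal (1 - Real.log x)) (Icc 0 1)
          (fun x => ‖Real.sign (gg (t + τ + x)) - Real.sign (gg (t + x))‖ / lamb) ≤ 1 →
        2 / Real.exp 1 ≤ lamb := by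
      intro lamb hlamb0 hrho
      by_contra hlt
      push_neg at hlt
      have htop : rhoVar (fun x => ENNReal.ofReal (1 - Real.log x)) (Icc 0 1)
          (fun x => ‖Real.sign (gg (t + τ + x)) - Real.sign (gg (t + x))‖ / lamb) = ⊤ := by
        unfold rhoVar
        rw [eq_top_iff]
        have step1 : (⊤:ℝ≥0∞) = ∫⁻ x in Ioc (0:ℝ) δ, ENNReal.ofReal x⁻¹ :=
          (lint_inv_top hδ0).symm
        rw [step1]
        have step2 : (∫⁻ x in Ioc (0:ℝ) δ, ENNReal.ofReal x⁻¹) ≤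
            ∫⁻ x in Ioc (0:ℝ) δ, phiVar (ENNReal.ofReal (1 - Real.log x))
              (‖Real.sign (gg (t + τ + x)) - Real.sign (gg (t + x))‖ / lamb) := by
          apply setLIntegral_mono' measurableSet_Ioc
          intro x hx
          have h2 : |Real.sign (gg (x + t + τ)) - Real.sign (gg (x + t))| = 2 := hsd x hx
          have e1 : t + τ + x = x + t + τ := by ring
          have e2 : t + x = x + t := by ring
          rw [e1, e2]
          have hnorm2 : ‖Real.sign (gg (x + t + τ)) - Real.sign (gg (x + t))‖ = 2 := by
            rw [Real.norm_eq_abs]; exact h2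
          rw [hnorm2]
          have hne : (ENNReal.ofReal (1 - Real.log x)) ≠ ⊤ := ENNReal.ofReal_ne_top
          unfold phiVar
          rw [if_neg hne]
          have hlx : Real.log x ≤ 0 := Real.log_nonpos hx.1.le (hx.2.trans hδ1)
          have htr : (ENNReal.ofReal (1 - Real.log x)).toReal = 1 - Real.log x :=
            ENNReal.toReal_ofReal (by linarith)
          rw [htr]
          exact ENNReal.ofReal_le_ofReal
            (base_bound (exp_le_two_div hlamb0 hlt) hx.1 (hx.2.trans hδ1))
        refine le_trans step2 (lintegral_mono_set ?_)
        intro x hx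
        exact ⟨hx.1.le, hx.2.trans hδ1⟩
      rw [htop] at hrho
      simp at hrho
    -- now bound the Luxemburg norm from below
    have hge : 2 / Real.exp 1 ≤
        luxNorm (fun x => ENNReal.ofReal (1 - Real.log x)) (Icc 0 1)
          (fun s => Real.sign (gg (t + τ + s)) - Real.sign (gg (t + s))) := by
      rw [luxNorm]
      apply le_csInf
      · exact ⟨2, by norm_num, claim1⟩
      · rintro lamb ⟨hlamb0, hrho⟩
        exact claim2 lamb hlamb0 hrho
    have hle2 : luxNorm (fun x => ENNReal.ofReal (1 - Real.log x)) (Icc 0 1)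
          (fun s => Real.sign (gg (t + τ + s)) - Real.sign (gg (t + s))) ≤ 1/2 := hnorm
    linarith [two_div_e_gt_half]
end
end

section
/- For every nonzero real τ there exists t ∈ ℝ such that (sin(t+τ) + sin(√2(t+τ))) · (sin t + sin(√2 t)) < 0. -/
open MeasureTheory Set ENNReal Real
noncomputable section

/-!
Let `g t = sin t + sin (ω t)` with `ω` irrational; `g t = 2 sin ((1 + ω) t / 2) cos ((1 - ω) t / 2)`,
so its zeros are the points `m π / (1 - ω) + n π / (1 + ω)` with `(m, n) = (0, even)` or
`(odd, 0)`, and irrationality makes the coordinates `(m, n)` unique. Hence no `τ ≠ 0` maps every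
zero into a zero: the three zeros `0`, `± π / (1 - ω)` already prevent it. All zeros of `g` are
simple, since `g = g' = 0` forces `cos t = cos (ω t) = 0`. So if `g z = 0 ≠ g (z + τ)`, the product
`g (t + τ) g t` has nonzero derivative at `z`, and by Fermat's theorem it cannot be `≥ 0`
everywhere.
-/

theorem exists_mul_neg_of_hasDerivAt {g : ℝ → ℝ} {z d τ : ℝ} (hz : g z = 0)
    (hd : HasDerivAt g d z) (hd₀ : d ≠ 0) (hg : DifferentiableAt ℝ g (z + τ))
    (hzτ : g (z + τ) ≠ 0) : ∃ t, g (t + τ) * g t < 0 := by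
  have hprod : HasDerivAt (fun t => g (t + τ) * g t) (g (z + τ) * d) z := by
    have h := (hg.hasDerivAt.comp_add_const z τ).mul hd
    rwa [hz, mul_zero, zero_add] at h
  by_contra! hnonneg
  have hmin : IsLocalMin (fun t => g (t + τ) * g t) z :=
    Filter.Eventually.of_forall fun t => by simpa [hz] using hnonneg t
  exact mul_ne_zero hzτ hd₀ (hmin.hasDerivAt_eq_zero hprod)

theorem Irrational.int_eq_zero_of_add_mul_eq_zero {ω : ℝ} (hω : Irrational ω) {p q : ℤ}
    (h : p + q * ω = 0) : p = 0 ∧ q = 0 := by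
  obtain rfl : q = 0 := by
    by_contra hq
    exact hω.ne_rational (-p) q (by field_simp; push_cast; linarith)
  simpa using h

theorem Irrational.ne_neg_one {x : ℝ} (hx : Irrational x) : x ≠ -1 := by
  exact_mod_cast hx.ne_int (-1)

def latticePt (ω : ℝ) (m n : ℤ) : ℝ := m * π / (1 - ω) + n * π / (1 + ω)

section

variable {ω : ℝ}

theorem latticePt_add (m n m' n' : ℤ) :
    latticePt ω m n + latticePt ω m' n' = latticePt ω (m + m') (n + n') := by
  simp only [latticePt]; push_cast; ring

theorem latticePt_zero_zero : latticePt ω 0 0 = 0 := by simp [latticePt]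

theorem latticePt_injective (hω : Irrational ω) {m n m' n' : ℤ}
    (h : latticePt ω m n = latticePt ω m' n') : m = m' ∧ n = n' := by
  have h₁ : 1 - ω ≠ 0 := sub_ne_zero.mpr hω.ne_one.symm
  have h₂ : 1 + ω ≠ 0 := fun h => hω.ne_neg_one (by linarith)
  have key : (((m - m') + (n - n') : ℤ) : ℝ) + (((m - m') - (n - n') : ℤ) : ℝ) * ω = 0 := by
    simp only [latticePt] at h
    field_simp at h
    push_cast; linear_combination h
  have := hω.int_eq_zero_of_add_mul_eq_zero key
  omega

theorem sin_add_sin_mul_eq_zero_iff (h₁ : ω ≠ 1) (h₂ : ω ≠ -1) {x : ℝ} :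
    sin x + sin (ω * x) = 0 ↔
      (∃ k : ℤ, x = latticePt ω 0 (2 * k)) ∨ ∃ k : ℤ, x = latticePt ω (2 * k + 1) 0 := by
  have h₁ : 1 - ω ≠ 0 := sub_ne_zero.mpr h₁.symm
  have h₂ : 1 + ω ≠ 0 := fun h => h₂ (by linarith)
  rw [sin_add_sin, mul_eq_zero, mul_eq_zero, sin_eq_zero_iff, cos_eq_zero_iff]
  simp only [latticePt, two_ne_zero, false_or]
  push_cast
  refine or_congr (exists_congr fun k => ?_) (exists_congr fun k => ?_)
  · rw [zero_mul, zero_div, zero_add, eq_div_iff h₂]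
    constructor <;> intro h <;> linarith
  · rw [zero_mul, zero_div, add_zero, eq_div_iff h₁]
    constructor <;> intro h <;> linarith

theorem hasDerivAt_sin_add_sin_mul (x : ℝ) :
    HasDerivAt (fun t => sin t + sin (ω * t)) (cos x + ω * cos (ω * x)) x := by
  have h := (hasDerivAt_sin x).add ((hasDerivAt_id' x).const_mul ω).sin
  rwa [mul_one, mul_comm] at h

variable (hω : Irrational ω)
include hω

theorem sin_add_sin_mul_latticePt_eq_zero_iff {m n : ℤ} :
    sin (latticePt ω m n) + sin (ω * latticePt ω m n) = 0 ↔
      (m = 0 ∧ Even n) ∨ (Odd m ∧ n = 0) := by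
  rw [sin_add_sin_mul_eq_zero_iff hω.ne_one hω.ne_neg_one]
  constructor
  · rintro (⟨k, hk⟩ | ⟨k, hk⟩) <;> obtain ⟨rfl, rfl⟩ := latticePt_injective hω hk
    · exact Or.inl ⟨rfl, even_two_mul k⟩
    · exact Or.inr ⟨odd_two_mul_add_one k, rfl⟩
  · rintro (⟨rfl, k, rfl⟩ | ⟨⟨k, rfl⟩, rfl⟩)
    · exact Or.inl ⟨k, by rw [two_mul]⟩
    · exact Or.inr ⟨k, rfl⟩

theorem exists_sin_add_sin_mul_eq_zero_and_add_ne_zero {τ : ℝ} (hτ : τ ≠ 0) :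
    ∃ z, sin z + sin (ω * z) = 0 ∧ sin (z + τ) + sin (ω * (z + τ)) ≠ 0 := by
  by_contra! h
  have hzero := fun m n => sin_add_sin_mul_latticePt_eq_zero_iff hω (m := m) (n := n)
  obtain ⟨m, n, rfl⟩ : ∃ m n, τ = latticePt ω m n := by
    have := h 0 (by simp)
    rw [zero_add, sin_add_sin_mul_eq_zero_iff hω.ne_one hω.ne_neg_one] at this
    rcases this with ⟨k, hk⟩ | ⟨k, hk⟩ <;> exact ⟨_, _, hk⟩
  have shift (s : ℤ) (hs : s = 0 ∨ Odd s) : (m + s = 0 ∧ Even n) ∨ (Odd (m + s) ∧ n = 0) := by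
    rw [← hzero, show latticePt ω (m + s) n = latticePt ω s 0 + latticePt ω m n by
      rw [latticePt_add, add_comm s, zero_add]]
    refine h _ ((hzero s 0).mpr ?_)
    rcases hs with rfl | hs
    exacts [Or.inl ⟨rfl, Even.zero⟩, Or.inr ⟨hs, rfl⟩]
  have h₀ := shift 0 (Or.inl rfl)
  have h₁ := shift 1 (Or.inr odd_one)
  have h₂ := shift (-1) (Or.inr (by decide))
  simp only [Int.even_iff, Int.odd_iff] at h₀ h₁ h₂
  obtain ⟨rfl, rfl⟩ : m = 0 ∧ n = 0 := by omega
  exact hτ latticePt_zero_zero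

theorem cos_add_mul_cos_mul_ne_zero {x : ℝ} (hx : sin x + sin (ω * x) = 0) :
    cos x + ω * cos (ω * x) ≠ 0 := by
  intro hx'
  have hω₂ : ω ^ 2 - 1 ≠ 0 := sub_ne_zero.mpr (sq_ne_one_iff.mpr ⟨hω.ne_one, hω.ne_neg_one⟩)
  have hcos : cos (ω * x) = 0 := by
    have : (ω ^ 2 - 1) * cos (ω * x) ^ 2 = 0 := by
      linear_combination (sin (ω * x) - sin x) * hx - (cos x - ω * cos (ω * x)) * hx'
        + sin_sq_add_cos_sq x - sin_sq_add_cos_sq (ω * x)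
    simpa [hω₂] using this
  obtain ⟨j, hj⟩ := cos_eq_zero_iff.mp hcos
  obtain ⟨k, hk⟩ := cos_eq_zero_iff.mp (by linear_combination hx' - ω * hcos : cos x = 0)
  have := hω.int_eq_zero_of_add_mul_eq_zero (p := 2 * j + 1) (q := -(2 * k + 1)) <| by
    refine (mul_eq_zero.mp ?_).resolve_right pi_ne_zero
    push_cast
    linear_combination -2 * hj + 2 * ω * hk
  omega

theorem exists_sin_add_sin_mul_add_mul_neg {τ : ℝ} (hτ : τ ≠ 0) :
    ∃ t, (sin (t + τ) + sin (ω * (t + τ))) * (sin t + sin (ω * t)) < 0 := by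
  obtain ⟨z, hz, hzτ⟩ := exists_sin_add_sin_mul_eq_zero_and_add_ne_zero hω hτ
  exact exists_mul_neg_of_hasDerivAt (g := fun t => sin t + sin (ω * t)) hz
    (hasDerivAt_sin_add_sin_mul z) (cos_add_mul_cos_mul_ne_zero hω hz)
    (hasDerivAt_sin_add_sin_mul _).differentiableAt hzτ

end

theorem stmt16 (τ : ℝ) (hτ : τ ≠ 0) :
    ∃ t : ℝ, (Real.sin (t + τ) + Real.sin (Real.sqrt 2 * (t + τ))) *
      (Real.sin t + Real.sin (Real.sqrt 2 * t)) < 0 :=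
  exists_sin_add_sin_mul_add_mul_neg irrational_sqrt_two hτ
end
end
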